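/- Let ξ be a Reeb field, φ ∈ psh(ξ), and v ∈ X_0. Then φ(v) ≥ φ(v_triv) − T(v;ξ), where v_triv ∈ X_0 is the trivial valuation (v_triv(f) = 0 for all f ∈ R∖{0}). In particular, φ(v) > −∞ whenever v is linearly bounded. -/

import Mathlib

open Filter Topology
open scoped Classical

noncomputable section

/-- A (real) semivaluation on `R` trivial on `k`, encoded as a function `R → ℝ ∪ {+∞} ⊆ EReal`. -/
def IsSemival (k : Type*) {R : Type*} [Field k] [CommRing R] [Algebra k R]
    (v : R → EReal) : Prop :=
  (∀ f, v f ≠ ⊥) ∧ (∀ f g, v (f * g) = v f + v g) ∧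
    (∀ f g, min (v f) (v g) ≤ v (f + g)) ∧ v 0 = ⊤ ∧
    ∀ c : k, c ≠ 0 → v (algebraMap k R c) = 0

/-- The pairing `⟨ξ, α⟩` between `ξ ∈ N_ℝ` and a weight `α ∈ M`. -/
def pairing {r : ℕ} (ξ : Fin r → ℝ) (α : Fin r → ℤ) : ℝ := ∑ i, ξ i * (α i : ℝ)

variable {k : Type*} [Field k] [IsAlgClosed k] [CharZero k]
variable {R : Type*} [CommRing R] [IsDomain R] [IsIntegrallyClosed R] [Algebra k R]
  [Algebra.FiniteType k R]
variable {r : ℕ} (𝒜 : (Fin r → ℤ) → Submodule k R) [GradedAlgebra 𝒜]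

/-- `ξ` is a Reeb field: `⟨ξ,α⟩ > 0` for all `α ∈ Λ ∖ {0}`. -/
def IsReeb (ξ : Fin r → ℝ) : Prop :=
  ∀ α : Fin r → ℤ, α ≠ 0 → 𝒜 α ≠ ⊥ → 0 < pairing ξ α

/-- The maximal ideal `𝔪` of the cone point. -/
def mIdeal : Ideal R := Ideal.span {f : R | ∃ α, α ≠ 0 ∧ f ∈ 𝒜 α}

/-- The semivaluation of the cone point `o`: `+∞` on `𝔪`, `0` elsewhere. -/
def oFun : R → EReal := fun f => if f ∈ mIdeal 𝒜 then (⊤ : EReal) else 0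

/-- The punctured Berkovich cone `X^an ∖ {o}`. -/
def XanP : Set (R → EReal) := {v | IsSemival k v ∧ v ≠ oFun 𝒜}

/-- The term `(log|f| + λ)/⟨ξ,α⟩` evaluated at `v`; recall `log|f|(v) = -v(f)`. -/
def fsTerm (ξ : Fin r → ℝ) (α : Fin r → ℤ) (f : R) (lam : ℝ) (v : R → EReal) : EReal :=
  (((pairing ξ α)⁻¹ : ℝ) : EReal) * (-(v f) + (lam : EReal))

/-- Fubini–Study functions with polarization `ξ`. -/
def IsFS (ξ : Fin r → ℝ) (φ : XanP 𝒜 → ℝ) : Prop :=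
  ∃ (N : ℕ) (f : Fin N → R) (α : Fin N → Fin r → ℤ) (lam : Fin N → ℝ),
    (∀ j, α j ≠ 0 ∧ f j ∈ 𝒜 (α j) ∧ f j ≠ 0) ∧
    (Ideal.span (Set.range f)).radical = mIdeal 𝒜 ∧
    ∀ v : XanP 𝒜, (φ v : EReal) = ⨆ j, fsTerm ξ (α j) (f j) (lam j) v.1

/-- Continuous `ξ`-psh functions: the closure of `H(ξ)` in `C⁰(X^an∖{o})` with the
topology of uniform convergence on compact subsets (compact-open topology). -/
def cpsh (ξ : Fin r → ℝ) : Set C(↥(XanP 𝒜), ℝ) := closure {φ | IsFS 𝒜 ξ ⇑φ}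

/-- `ξ`-psh functions: pointwise limits of decreasing nets of continuous `ξ`-psh
functions, not identically `-∞`, with values in `ℝ ∪ {-∞}`. -/
def IsPsh (ξ : Fin r → ℝ) (φ : XanP 𝒜 → EReal) : Prop :=
  (∀ v, φ v ≠ ⊤) ∧ (∃ v, φ v ≠ ⊥) ∧
  ∃ (ι : Type) (le : ι → ι → Prop),
    Nonempty ι ∧ (∀ i j : ι, ∃ l, le i l ∧ le j l) ∧
    ∃ φi : ι → C(↥(XanP 𝒜), ℝ),
      (∀ i, φi i ∈ cpsh 𝒜 ξ) ∧
      (∀ i j, le i j → ∀ v, φi j v ≤ φi i v) ∧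
      ∀ v, (⨅ i, ((φi i v : ℝ) : EReal)) = φ v

/-- The NA link `X₀ = {v : v(𝔪) = 0}`, as a subset of the punctured cone. -/
def linkSet : Set (↥(XanP 𝒜)) :=
  {v | (∀ f ∈ mIdeal 𝒜, f ≠ 0 → 0 ≤ v.1 f) ∧
    sInf {x : EReal | ∃ f ∈ mIdeal 𝒜, f ≠ 0 ∧ x = v.1 f} = 0}

/-- `T(v;ξ) = sup { v(f)/⟨ξ,α⟩ : α ∈ Λ∖{0}, f ∈ R_α ∖ {0} }`. -/
def Tfun (v : R → EReal) (ξ : Fin r → ℝ) : EReal :=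
  sSup {x : EReal | ∃ (α : Fin r → ℤ) (f : R), α ≠ 0 ∧ f ∈ 𝒜 α ∧ f ≠ 0 ∧
    x = (((pairing ξ α)⁻¹ : ℝ) : EReal) * v f}

end

/-!
At the trivial valuation a Fubini–Study function `max_j (log|f_j| + λ_j)/⟨ξ,α_j⟩` takes the value
`max_j λ_j/⟨ξ,α_j⟩`, and passing to `v` lowers the `j`-th term by `v(f_j)/⟨ξ,α_j⟩ ≤ T(v;ξ)`.
An inequality `ψ(x) ≤ ψ(y) + c` between two given points survives uniform limits and decreasing
limits, hence holds for every `ξ`-psh function.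

For the finiteness statement, pick `w` with `φ(w) > -∞`. Since `R` is generated by finitely many
homogeneous elements and `R_0 = k`, there is `C` with `w(f) ≥ -C⟨ξ,α⟩` for all `f ∈ R_α`
(it holds on the generators, is multiplicative, and survives `k`-linear combinations inside one
degree). The same comparison then gives `φ(v_triv) ≥ φ(w) - C > -∞`.
-/

namespace EReal

lemma sub_le_of_forall_sub_coe_le {a b c : EReal} (hb : b ≠ ⊤)
    (h : ∀ t : ℝ, c ≤ t → a - t ≤ b) : a - c ≤ b := by
  induction c with
  | bot =>
    obtain ⟨s, hbs, -⟩ := EReal.lt_iff_exists_real_btwn.mp (lt_top_iff_ne_top.mpr hb)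
    suffices a = ⊥ by simp [this]
    refine (EReal.eq_bot_iff_forall_lt a).mpr fun u => ?_
    have hlt : a - (u - s : ℝ) < s := (h (u - s) bot_le).trans_lt hbs
    rw [EReal.sub_lt_iff (.inl (coe_ne_bot _)) (.inl (coe_ne_top _))] at hlt
    exact_mod_cast hlt.trans_eq (by norm_cast; ring)
  | coe t => exact h t le_rfl
  | top => simp [EReal.sub_top]

lemma ne_bot_of_sub_le {a b c : EReal} (ha : a ≠ ⊥) (hc : c ≠ ⊤) (h : a - c ≤ b) : b ≠ ⊥ := by
  rintro rfl
  rw [le_bot_iff, sub_eq_add_neg, EReal.add_eq_bot_iff, EReal.neg_eq_bot_iff] at h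
  exact h.elim ha hc

lemma zero_le_coe_inv_mul_add {p C : ℝ} (hp : 0 < p) {a : EReal}
    (ha : ((-(C * p) : ℝ) : EReal) ≤ a) : 0 ≤ ((p⁻¹ : ℝ) : EReal) * a + C := by
  induction a with
  | bot => exact absurd (le_bot_iff.mp ha) (coe_ne_bot _)
  | top => simp [EReal.coe_mul_top_of_pos (inv_pos.mpr hp)]
  | coe a =>
    have hC : -C ≤ p⁻¹ * a := by
      rw [le_inv_mul_iff₀ hp]
      exact_mod_cast (by linarith [EReal.coe_le_coe_iff.mp ha])
    exact_mod_cast (by linarith)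

end EReal

namespace IsSemival

variable {k R : Type*} [Field k] [CommRing R] [Algebra k R] {w : R → EReal}

lemma ne_bot (hw : IsSemival k w) (f : R) : w f ≠ ⊥ := hw.1 f

lemma map_mul (hw : IsSemival k w) (f g : R) : w (f * g) = w f + w g := hw.2.1 f g

lemma min_le_map_add (hw : IsSemival k w) (f g : R) : min (w f) (w g) ≤ w (f + g) :=
  hw.2.2.1 f g

lemma map_zero (hw : IsSemival k w) : w 0 = ⊤ := hw.2.2.2.1

lemma map_algebraMap (hw : IsSemival k w) {c : k} (hc : c ≠ 0) : w (algebraMap k R c) = 0 :=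
  hw.2.2.2.2 c hc

lemma map_one (hw : IsSemival k w) : w 1 = 0 := by
  simpa using hw.map_algebraMap one_ne_zero

lemma le_map_smul (hw : IsSemival k w) (c : k) (f : R) : w f ≤ w (c • f) := by
  rcases eq_or_ne c 0 with rfl | hc
  · simp [hw.map_zero]
  · rw [Algebra.smul_def, hw.map_mul, hw.map_algebraMap hc, zero_add]

end IsSemival

section Pairing

variable {r : ℕ} (ξ : Fin r → ℝ)

lemma pairing_zero : pairing ξ 0 = 0 := by simp [pairing]

lemma pairing_add (a b : Fin r → ℤ) : pairing ξ (a + b) = pairing ξ a + pairing ξ b := by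
  simp [pairing, mul_add, Finset.sum_add_distrib]

end Pairing

lemma fsTerm_le_fsTerm_add {R : Type*} {r : ℕ} {ξ : Fin r → ℝ} {α : Fin r → ℤ} {f : R}
    {lam t : ℝ} {x y : R → EReal} (hp : 0 < pairing ξ α) (hx : x f ≠ ⊥) (hy : y f ≠ ⊥)
    (h : (((pairing ξ α)⁻¹ : ℝ) : EReal) * y f ≤ (((pairing ξ α)⁻¹ : ℝ) : EReal) * x f + t) :
    fsTerm ξ α f lam x ≤ fsTerm ξ α f lam y + t := by
  unfold fsTerm
  have hq : 0 < (pairing ξ α)⁻¹ := inv_pos.mpr hp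
  generalize (pairing ξ α)⁻¹ = q at hq h ⊢
  generalize x f = a at hx h ⊢
  generalize y f = b at hy h ⊢
  induction a with
  | bot => exact absurd rfl hx
  | top => simp [EReal.coe_mul_bot_of_pos hq]
  | coe a =>
    induction b with
    | bot => exact absurd rfl hy
    | top =>
      rw [EReal.coe_mul_top_of_pos hq, top_le_iff] at h
      exact absurd h (by norm_cast; exact EReal.coe_ne_top _)
    | coe b =>
      norm_cast at h ⊢
      linarith

section Graded

variable {k R ι : Type*} [Field k] [CommRing R] [Algebra k R] [DecidableEq ι] [AddMonoid ι]
  (𝒜 : ι → Submodule k R) [GradedAlgebra 𝒜]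

lemma GradedAlgebra.exists_finset_adjoin_eq_top_of_homogeneous [Algebra.FiniteType k R] :
    ∃ t : Finset R, Algebra.adjoin k (t : Set R) = ⊤ ∧ ∀ g ∈ t, ∃ β, g ∈ 𝒜 β := by
  obtain ⟨s, hs⟩ := Algebra.FiniteType.out (R := k) (A := R)
  refine ⟨s.biUnion fun a => (DirectSum.decompose 𝒜 a).support.image
    fun β => (DirectSum.decompose 𝒜 a β : R), ?_, ?_⟩
  · rw [← top_le_iff, ← hs, Algebra.adjoin_le_iff]
    intro a ha
    rw [← DirectSum.sum_support_decompose 𝒜 a]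
    exact Subalgebra.sum_mem _ fun β hβ =>
      Algebra.subset_adjoin (by simpa using ⟨a, ha, β, DFinsupp.mem_support_iff.mp hβ, rfl⟩)
  · simp only [Finset.mem_biUnion, Finset.mem_image]
    rintro g ⟨a, -, β, -, rfl⟩
    exact ⟨β, SetLike.coe_mem _⟩

end Graded

section LinearLowerBound

variable {k R : Type*} [Field k] [CommRing R] [Algebra k R] {r : ℕ}
  {𝒜 : (Fin r → ℤ) → Submodule k R} {ξ : Fin r → ℝ}

lemma IsReeb.pairing_pos (hξ : IsReeb 𝒜 ξ) {α : Fin r → ℤ} {f : R} (hα : α ≠ 0)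
    (hf : f ∈ 𝒜 α) (hf0 : f ≠ 0) : 0 < pairing ξ α :=
  hξ α hα ((Submodule.ne_bot_iff _).mpr ⟨f, hf, hf0⟩)

namespace IsSemival

variable {w : R → EReal}

lemma eventually_linear_lower_bound_of_mem (hw : IsSemival k w) (hξ : IsReeb 𝒜 ξ)
    (h0 : 𝒜 0 = Submodule.span k {(1 : R)}) {β : Fin r → ℤ} {g : R} (hg : g ∈ 𝒜 β) :
    ∀ᶠ C : ℝ in atTop, ((-(C * pairing ξ β) : ℝ) : EReal) ≤ w g := by
  rcases eq_or_ne g 0 with rfl | hg0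
  · simp [hw.map_zero]
  rcases eq_or_ne β 0 with rfl | hβ
  · rw [h0, Submodule.mem_span_singleton] at hg
    obtain ⟨c, rfl⟩ := hg
    have hc : c ≠ 0 := by rintro rfl; simp at hg0
    rw [← Algebra.algebraMap_eq_smul_one, hw.map_algebraMap hc]
    simp [pairing_zero]
  have hp := hξ.pairing_pos hβ hg hg0
  rcases eq_or_ne (w g) ⊤ with htop | htop
  · simp [htop]
  obtain ⟨x, hx⟩ : ∃ x : ℝ, w g = x := ⟨_, (EReal.coe_toReal htop (hw.ne_bot g)).symm⟩
  filter_upwards [eventually_ge_atTop (-x / pairing ξ β)] with C hC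
  rw [div_le_iff₀ hp] at hC
  rw [hx]
  exact_mod_cast (by linarith)

lemma exists_linear_lower_bound_of_mem_closure [GradedAlgebra 𝒜] (hw : IsSemival k w)
    {t : Set R} {C : ℝ}
    (ht : ∀ g ∈ t, ∃ β, g ∈ 𝒜 β ∧ ((-(C * pairing ξ β) : ℝ) : EReal) ≤ w g)
    {m : R} (hm : m ∈ Submonoid.closure t) :
    ∃ β, m ∈ 𝒜 β ∧ ((-(C * pairing ξ β) : ℝ) : EReal) ≤ w m := by
  induction hm using Submonoid.closure_induction with
  | mem g hg => exact ht g hg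
  | one => exact ⟨0, SetLike.one_mem_graded 𝒜, by simp [pairing_zero, hw.map_one]⟩
  | mul x y _ _ hx hy =>
    obtain ⟨β₁, hx𝒜, hxw⟩ := hx
    obtain ⟨β₂, hy𝒜, hyw⟩ := hy
    refine ⟨β₁ + β₂, SetLike.mul_mem_graded hx𝒜 hy𝒜, ?_⟩
    rw [hw.map_mul, pairing_add, mul_add, neg_add, EReal.coe_add]
    exact add_le_add hxw hyw

lemma linear_lower_bound_proj_of_mem_span [GradedAlgebra 𝒜] (hw : IsSemival k w)
    {S : Set R} {C : ℝ}
    (hS : ∀ m ∈ S, ∃ β, m ∈ 𝒜 β ∧ ((-(C * pairing ξ β) : ℝ) : EReal) ≤ w m)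
    {f : R} (hf : f ∈ Submodule.span k S) (α : Fin r → ℤ) :
    ((-(C * pairing ξ α) : ℝ) : EReal) ≤ w (GradedAlgebra.proj 𝒜 α f) := by
  induction hf using Submodule.span_induction with
  | mem m hm =>
    obtain ⟨β, hm𝒜, hmw⟩ := hS m hm
    rw [GradedAlgebra.proj_apply]
    rcases eq_or_ne β α with rfl | hne
    · rwa [DirectSum.decompose_of_mem_same 𝒜 hm𝒜]
    · simp [DirectSum.decompose_of_mem_ne 𝒜 hm𝒜 hne, hw.map_zero]
  | zero => simp [hw.map_zero]
  | add x y _ _ hx hy => rw [map_add]; exact (le_min hx hy).trans (hw.min_le_map_add _ _)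
  | smul c x _ hx => rw [map_smul]; exact hx.trans (hw.le_map_smul c _)

theorem exists_linear_lower_bound [GradedAlgebra 𝒜] [Algebra.FiniteType k R]
    (hw : IsSemival k w) (hξ : IsReeb 𝒜 ξ) (h0 : 𝒜 0 = Submodule.span k {(1 : R)}) :
    ∃ C : ℝ, ∀ α f, f ∈ 𝒜 α → ((-(C * pairing ξ α) : ℝ) : EReal) ≤ w f := by
  obtain ⟨t, ht_adj, ht_hom⟩ := GradedAlgebra.exists_finset_adjoin_eq_top_of_homogeneous 𝒜
  obtain ⟨C, hC⟩ : ∃ C : ℝ, ∀ g ∈ t,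
      ∃ β, g ∈ 𝒜 β ∧ ((-(C * pairing ξ β) : ℝ) : EReal) ≤ w g := by
    refine (t.eventually_all (l := atTop).mpr fun g hg => ?_).exists
    obtain ⟨β, hg𝒜⟩ := ht_hom g hg
    exact (hw.eventually_linear_lower_bound_of_mem hξ h0 hg𝒜).mono fun C hC => ⟨β, hg𝒜, hC⟩
  refine ⟨C, fun α f hf => ?_⟩
  have hf_span : f ∈ Submodule.span k (Submonoid.closure (t : Set R) : Set R) := by
    rw [← Algebra.adjoin_eq_span, ht_adj]
    trivial
  have := hw.linear_lower_bound_proj_of_mem_span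
    (fun m hm => hw.exists_linear_lower_bound_of_mem_closure hC hm) hf_span α
  rwa [GradedAlgebra.proj_apply, DirectSum.decompose_of_mem_same 𝒜 hf] at this

end IsSemival

end LinearLowerBound

section Psh

variable {k R : Type*} [Field k] [CommRing R] [Algebra k R] {r : ℕ}
  {𝒜 : (Fin r → ℤ) → Submodule k R} {ξ : Fin r → ℝ}

lemma IsFS.le_add (hξ : IsReeb 𝒜 ξ) {ψ : XanP 𝒜 → ℝ} (hψ : IsFS 𝒜 ξ ψ) {x y : XanP 𝒜}
    {t : ℝ} (h : ∀ α f, α ≠ 0 → f ∈ 𝒜 α → f ≠ 0 →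
      (((pairing ξ α)⁻¹ : ℝ) : EReal) * y.1 f ≤ (((pairing ξ α)⁻¹ : ℝ) : EReal) * x.1 f + t) :
    ψ x ≤ ψ y + t := by
  obtain ⟨N, f, α, lam, hj, -, hval⟩ := hψ
  suffices (ψ x : EReal) ≤ ψ y + t by exact_mod_cast this
  rw [hval x]
  refine iSup_le fun j => ?_
  obtain ⟨hα, hf𝒜, hf0⟩ := hj j
  calc fsTerm ξ (α j) (f j) (lam j) x.1 ≤ fsTerm ξ (α j) (f j) (lam j) y.1 + t :=
        fsTerm_le_fsTerm_add (hξ.pairing_pos hα hf𝒜 hf0) (x.2.1.ne_bot _) (y.2.1.ne_bot _)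
          (h _ _ hα hf𝒜 hf0)
    _ ≤ ψ y + t := by
        rw [hval y]
        gcongr
        exact le_iSup (fun i => fsTerm ξ (α i) (f i) (lam i) y.1) j

lemma le_add_of_mem_cpsh {x y : XanP 𝒜} {t : ℝ}
    (h : ∀ ψ : C(XanP 𝒜, ℝ), IsFS 𝒜 ξ ψ → ψ x ≤ ψ y + t) {ψ : C(XanP 𝒜, ℝ)}
    (hψ : ψ ∈ cpsh 𝒜 ξ) : ψ x ≤ ψ y + t :=
  closure_minimal h (isClosed_le (f := fun ψ : C(XanP 𝒜, ℝ) => ψ x) (g := fun ψ => ψ y + t)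
    (by fun_prop) (by fun_prop)) hψ

lemma IsPsh.sub_le (hξ : IsReeb 𝒜 ξ) {φ : XanP 𝒜 → EReal} (hφ : IsPsh 𝒜 ξ φ)
    {x y : XanP 𝒜} {c : EReal} (h : ∀ α f, α ≠ 0 → f ∈ 𝒜 α → f ≠ 0 →
      (((pairing ξ α)⁻¹ : ℝ) : EReal) * y.1 f ≤ (((pairing ξ α)⁻¹ : ℝ) : EReal) * x.1 f + c) :
    φ x - c ≤ φ y := by
  obtain ⟨hφ_top, -, ι, -, -, -, φi, hφi, -, hφ_inf⟩ := hφ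
  refine EReal.sub_le_of_forall_sub_coe_le (hφ_top y) fun t ht => ?_
  have hφi_le : ∀ i, φi i x ≤ φi i y + t := fun i =>
    le_add_of_mem_cpsh (fun ψ hψ => hψ.le_add hξ fun α f hα hf hf0 =>
      (h α f hα hf hf0).trans (by gcongr)) (hφi i)
  rw [← hφ_inf x, ← hφ_inf y]
  exact le_iInf fun i => EReal.sub_le_of_le_add ((iInf_le _ i).trans (by exact_mod_cast hφi_le i))

end Psh

section Statements

variable {k : Type*} [Field k] [IsAlgClosed k] [CharZero k]
variable {R : Type*} [CommRing R] [IsDomain R] [IsIntegrallyClosed R] [Algebra k R]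
  [Algebra.FiniteType k R]
variable {r : ℕ} (𝒜 : (Fin r → ℤ) → Submodule k R) [GradedAlgebra 𝒜]

theorem statement9 (h0 : 𝒜 0 = Submodule.span k {(1 : R)}) (ξ : Fin r → ℝ)
    (hξ : IsReeb 𝒜 ξ) (φ : ↥(XanP 𝒜) → EReal) (hφ : IsPsh 𝒜 ξ φ)
    (v : ↥(XanP 𝒜))
    -- `vtriv` is the trivial valuation: `v_triv(f) = 0` for all `f ≠ 0`
    (vtriv : ↥(XanP 𝒜)) (hvt : ∀ f : R, f ≠ 0 → vtriv.1 f = 0) :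
    φ vtriv - Tfun 𝒜 v.1 ξ ≤ φ v ∧ (Tfun 𝒜 v.1 ξ < ⊤ → φ v ≠ ⊥) := by
  have h_vtriv_v : φ vtriv - Tfun 𝒜 v.1 ξ ≤ φ v := hφ.sub_le hξ fun α f hα hf hf0 => by
    rw [hvt f hf0, mul_zero, zero_add]
    exact le_sSup ⟨α, f, hα, hf, hf0, rfl⟩
  refine ⟨h_vtriv_v, fun hT => EReal.ne_bot_of_sub_le ?_ hT.ne h_vtriv_v⟩
  obtain ⟨w, hw⟩ := hφ.2.1
  obtain ⟨C, hC⟩ := w.2.1.exists_linear_lower_bound hξ h0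
  have h_w_vtriv : φ w - C ≤ φ vtriv := hφ.sub_le hξ fun α f hα hf hf0 => by
    rw [hvt f hf0, mul_zero]
    exact EReal.zero_le_coe_inv_mul_add (hξ.pairing_pos hα hf hf0) (hC α f hf)
  exact EReal.ne_bot_of_sub_le hw (EReal.coe_ne_top C) h_w_vtriv

end Statements
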